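/- arXiv:2507.18589 — 4 statements merged into one kernel-verified Lean document; each statement's English description precedes it below -/
import Mathlib

section
/- Let p be a prime with p ≡ 3 (mod 4) and set ζ = e^{2πi/p}. Then ∏_{1≤j<k≤(p-1)/2} (ζ^{j²} - ζ^{k²})² = (-p)^{(p-3)/4}. -/
/-!
The residues `j²`, `1 ≤ j ≤ (p - 1) / 2`, are exactly the nonzero squares `Q ⊆ 𝔽_p`, each taken
once. Up to the sign `(-1) ^ ((p - 3) / 4)` the product is `∏ (ζ^a - ζ^b)` over ordered pairs
`a ≠ b` of `Q`, and `ζ^a - ζ^b = ζ^b (ζ^(a-b) - 1)`. The factors `ζ^b` multiply to `1`, because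
`∑ Q` is fixed by multiplication by any square. As `-1` is not a square, the number of ways to
write `c ≠ 0` as `a - b` is invariant under `c ↦ s c` (`s` a square) and under `c ↦ -c`, hence
the same for all `c ≠ 0`, namely `(p - 3) / 4` by double counting. The remaining product is
therefore `(∏_{c ≠ 0} (ζ^c - 1)) ^ ((p - 3) / 4) = p ^ ((p - 3) / 4)`.
-/

open Finset

namespace Finset

variable {α β M : Type*}

theorem prod_offDiag_eq_prod_lt_mul_swap [LinearOrder α] [CommMonoid M] (s : Finset α)
    (f : α × α → M) :
    ∏ x ∈ s.offDiag, f x = ∏ x ∈ s ×ˢ s with x.1 < x.2, f x * f x.swap := by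
  rw [← prod_filter_mul_prod_filter_not s.offDiag (fun x => x.1 < x.2), prod_mul_distrib]
  congr 1
  · refine prod_congr ?_ fun _ _ => rfl
    ext x
    simp only [mem_filter, mem_offDiag, mem_product]
    exact ⟨fun h => ⟨⟨h.1.1, h.1.2.1⟩, h.2⟩,
      fun h => ⟨⟨h.1.1, h.1.2, h.2.ne⟩, h.2⟩⟩
  · refine prod_nbij' Prod.swap Prod.swap ?_ ?_ (fun _ _ => rfl) (fun _ _ => rfl)
      (fun _ _ => rfl) <;>
    · intro x hx
      simp only [mem_filter, mem_offDiag, mem_product, Prod.fst_swap,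
        Prod.snd_swap] at hx ⊢
      grind

theorem prod_offDiag_sub [LinearOrder α] [CommRing M] (s : Finset α) (a : α → M) :
    ∏ x ∈ s.offDiag, (a x.1 - a x.2)
      = (-1) ^ (#s).choose 2 * ∏ x ∈ s ×ˢ s with x.1 < x.2, (a x.1 - a x.2) ^ 2 := by
  rw [prod_offDiag_eq_prod_lt_mul_swap, ← card_product_filter_lt, ← prod_const,
    ← prod_mul_distrib]
  refine prod_congr rfl fun x _ => ?_
  simp only [Prod.fst_swap, Prod.snd_swap]
  ring

@[to_additive]
theorem prod_offDiag_image [DecidableEq α] [DecidableEq β] [CommMonoid M] {s : Finset α}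
    {f : α → β} (hf : Set.InjOn f s) (g : β × β → M) :
    ∏ y ∈ (s.image f).offDiag, g y = ∏ x ∈ s.offDiag, g (f x.1, f x.2) := by
  have himage : (s.image f).offDiag = s.offDiag.image (fun x => (f x.1, f x.2)) := by
    ext ⟨u, v⟩
    simp only [mem_offDiag, mem_image, Prod.mk.injEq, Prod.exists]
    constructor
    · rintro ⟨⟨a, ha, rfl⟩, ⟨b, hb, rfl⟩, hab⟩
      exact ⟨a, b, ⟨ha, hb, fun h => hab (h ▸ rfl)⟩, rfl, rfl⟩
    · rintro ⟨a, b, ⟨ha, hb, hab⟩, rfl, rfl⟩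
      exact ⟨⟨a, ha, rfl⟩, ⟨b, hb, rfl⟩, fun h => hab (hf ha hb h)⟩
  rw [himage, prod_image]
  exact (hf.prodMap hf).mono fun x hx => by
    simp only [coe_offDiag, Set.mem_offDiag] at hx
    exact ⟨hx.1, hx.2.1⟩

end Finset

namespace AddChar

variable {A R : Type*}

theorem map_sum_eq_prod [AddCommMonoid A] [CommMonoid R] (ψ : AddChar A R) {ι : Type*}
    (s : Finset ι) (f : ι → A) :
    ψ (∑ i ∈ s, f i) = ∏ i ∈ s, ψ (f i) := by
  classical
  induction s using Finset.induction_on with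
  | empty => simp
  | insert i s hi ih => rw [sum_insert hi, prod_insert hi, map_add_eq_mul, ih]

theorem sub_eq_mul_sub_one [AddCommGroup A] [CommRing R] (ψ : AddChar A R) (a b : A) :
    ψ a - ψ b = ψ b * (ψ (a - b) - 1) := by
  rw [mul_sub, mul_one, ← map_add_eq_mul, add_sub_cancel]

end AddChar

theorem prod_Icc_prod_Icc_sub_one {M : Type*} [CommMonoid M] (n : ℕ) (f : ℕ → ℕ → M) :
    ∏ k ∈ Icc 1 n, ∏ j ∈ Icc 1 (k - 1), f j k
      = ∏ x ∈ Icc 1 n ×ˢ Icc 1 n with x.1 < x.2, f x.1 x.2 := by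
  refine (prod_finset_product_right (f := fun x => f x.1 x.2) _ _ _ fun x => ?_).symm
  simp only [mem_filter, mem_product, mem_Icc]
  omega

section FiniteField

variable {F : Type*} [Field F] [Fintype F]

theorem not_isSquare_neg (hF : Fintype.card F % 4 = 3) {c : F} (hc : c ≠ 0) (h : IsSquare c) :
    ¬IsSquare (-c) := fun hneg =>
  FiniteField.isSquare_neg_one_iff.1 (neg_div_self hc ▸ hneg.div h) hF

variable [DecidableEq F]

theorem isSquare_or_isSquare_neg (hF : Fintype.card F % 4 = 3) (c : F) :
    IsSquare c ∨ IsSquare (-c) := by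
  by_contra! h
  have hneg_one : quadraticChar F (-1) = -1 :=
    quadraticChar_neg_one_iff_not_isSquare.2 <|
      FiniteField.isSquare_neg_one_iff.not.2 (not_not.2 hF)
  have := quadraticChar_neg_one_iff_not_isSquare.2 h.2
  rw [neg_eq_neg_one_mul, map_mul, hneg_one, quadraticChar_neg_one_iff_not_isSquare.2 h.1] at this
  norm_num at this

variable (F) in
def nonzeroSquares : Finset F := {x | x ≠ 0 ∧ IsSquare x}

variable (F) in
def squareDiffCount (c : F) : ℕ := #{x ∈ (nonzeroSquares F).offDiag | x.1 - x.2 = c}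

@[simp]
theorem mem_nonzeroSquares {x : F} : x ∈ nonzeroSquares F ↔ x ≠ 0 ∧ IsSquare x := by
  simp [nonzeroSquares]

theorem image_mul_nonzeroSquares {s : F} (hs : s ∈ nonzeroSquares F) :
    (nonzeroSquares F).image (s * ·) = nonzeroSquares F := by
  rw [mem_nonzeroSquares] at hs
  refine eq_of_subset_of_card_le (fun y hy => ?_) ?_
  · obtain ⟨x, hx, rfl⟩ := mem_image.1 hy
    rw [mem_nonzeroSquares] at hx ⊢
    exact ⟨mul_ne_zero hs.1 hx.1, hs.2.mul hx.2⟩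
  · rw [card_image_of_injective _ (mul_right_injective₀ hs.1)]

theorem sum_offDiag_nonzeroSquares_mul {M : Type*} [AddCommMonoid M] {s : F}
    (hs : s ∈ nonzeroSquares F) (g : F × F → M) :
    ∑ x ∈ (nonzeroSquares F).offDiag, g (s * x.1, s * x.2)
      = ∑ x ∈ (nonzeroSquares F).offDiag, g x := by
  conv_rhs => rw [← image_mul_nonzeroSquares hs]
  rw [sum_offDiag_image (mul_right_injective₀ (mem_nonzeroSquares.1 hs).1).injOn]

theorem squareDiffCount_mul {s : F} (hs : s ∈ nonzeroSquares F) (c : F) :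
    squareDiffCount F (s * c) = squareDiffCount F c := by
  have hs0 : s ≠ 0 := (mem_nonzeroSquares.1 hs).1
  simp only [squareDiffCount, card_filter]
  rw [← sum_offDiag_nonzeroSquares_mul hs]
  refine sum_congr rfl fun x _ => ?_
  simp only [← mul_sub, mul_right_inj' hs0]

theorem squareDiffCount_neg (c : F) : squareDiffCount F (-c) = squareDiffCount F c := by
  refine card_nbij' Prod.swap Prod.swap ?_ ?_ (fun _ _ => rfl) (fun _ _ => rfl) <;>
  · intro x hx
    simp only [coe_filter, Set.mem_ofPred_eq, mem_offDiag, Prod.fst_swap, Prod.snd_swap] at hx ⊢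
    grind

theorem sum_offDiag_nonzeroSquares_snd : ∑ x ∈ (nonzeroSquares F).offDiag, x.2 = 0 := by
  rcases le_or_gt #(nonzeroSquares F) 1 with hcard | hcard
  · have : #(nonzeroSquares F).offDiag = 0 := by
      rw [offDiag_card]; exact Nat.sub_eq_zero_of_le (mul_le_of_le_one_left (Nat.zero_le _) hcard)
    rw [card_eq_zero.1 this, sum_empty]
  obtain ⟨s, hs, hs1⟩ := exists_mem_ne hcard 1
  have hfix : s * ∑ x ∈ (nonzeroSquares F).offDiag, x.2
      = ∑ x ∈ (nonzeroSquares F).offDiag, x.2 := by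
    rw [mul_sum]; exact sum_offDiag_nonzeroSquares_mul hs Prod.snd
  have : (s - 1) * ∑ x ∈ (nonzeroSquares F).offDiag, x.2 = 0 := by
    rw [sub_mul, one_mul, hfix, sub_self]
  exact (mul_eq_zero.1 this).resolve_left (sub_ne_zero.2 hs1)

theorem two_mul_card_nonzeroSquares (hF : Fintype.card F % 4 = 3) :
    2 * #(nonzeroSquares F) = Fintype.card F - 1 := by
  have hdisj : Disjoint (nonzeroSquares F) ((nonzeroSquares F).image Neg.neg) := by
    refine disjoint_left.2 fun x hx hx' => ?_
    obtain ⟨y, hy, rfl⟩ := mem_image.1 hx'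
    rw [mem_nonzeroSquares] at hx hy
    exact not_isSquare_neg hF hy.1 hy.2 hx.2
  have hunion : nonzeroSquares F ∪ (nonzeroSquares F).image Neg.neg = univ.erase 0 := by
    ext x
    simp only [mem_union, mem_nonzeroSquares, mem_image, mem_erase, mem_univ, and_true]
    refine ⟨?_, fun hx => ?_⟩
    · rintro (h | ⟨y, hy, rfl⟩)
      exacts [h.1, neg_ne_zero.2 hy.1]
    · rcases isSquare_or_isSquare_neg hF x with h | h
      exacts [Or.inl ⟨hx, h⟩, Or.inr ⟨-x, ⟨neg_ne_zero.2 hx, h⟩, neg_neg x⟩]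
  rw [← card_univ, ← card_erase_of_mem (mem_univ 0), ← hunion, card_union_of_disjoint hdisj,
    card_image_of_injective _ neg_injective, two_mul]

theorem squareDiffCount_eq_squareDiffCount_one (hF : Fintype.card F % 4 = 3) {c : F}
    (hc : c ≠ 0) : squareDiffCount F c = squareDiffCount F 1 := by
  rcases isSquare_or_isSquare_neg hF c with h | h
  · rw [← mul_one c, squareDiffCount_mul (mem_nonzeroSquares.2 ⟨hc, h⟩)]
  · rw [← squareDiffCount_neg, ← mul_one (-c),
      squareDiffCount_mul (mem_nonzeroSquares.2 ⟨neg_ne_zero.2 hc, h⟩)]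

theorem sum_squareDiffCount :
    ∑ c ∈ univ.erase 0, squareDiffCount F c = #(nonzeroSquares F).offDiag :=
  (card_eq_sum_card_fiberwise fun _ hx =>
    mem_erase.2 ⟨sub_ne_zero.2 (mem_offDiag.1 hx).2.2, mem_univ _⟩).symm

theorem squareDiffCount_eq (hF : Fintype.card F % 4 = 3) {c : F} (hc : c ≠ 0) :
    squareDiffCount F c = (Fintype.card F - 3) / 4 := by
  set n := #(nonzeroSquares F)
  have hcard := two_mul_card_nonzeroSquares hF
  have hn : 0 < n := card_pos.2 ⟨1, mem_nonzeroSquares.2 ⟨one_ne_zero, IsSquare.one⟩⟩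
  have hsum := sum_squareDiffCount (F := F)
  rw [sum_congr rfl fun c hc => squareDiffCount_eq_squareDiffCount_one hF (ne_of_mem_erase hc),
    sum_const, card_erase_of_mem (mem_univ 0), card_univ, ← hcard, smul_eq_mul, offDiag_card,
    ← Nat.mul_sub_one, mul_assoc, mul_left_comm] at hsum
  have := Nat.eq_of_mul_eq_mul_left hn hsum
  rw [squareDiffCount_eq_squareDiffCount_one hF hc]
  omega

theorem prod_offDiag_nonzeroSquares_sub (hF : Fintype.card F % 4 = 3) {R : Type*} [CommRing R]
    (ψ : AddChar F R) :
    ∏ x ∈ (nonzeroSquares F).offDiag, (ψ x.1 - ψ x.2)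
      = (∏ c ∈ univ.erase 0, (ψ c - 1)) ^ ((Fintype.card F - 3) / 4) := by
  have hmaps : ∀ x ∈ (nonzeroSquares F).offDiag, x.1 - x.2 ∈ univ.erase 0 := fun x hx =>
    mem_erase.2 ⟨sub_ne_zero.2 (mem_offDiag.1 hx).2.2, mem_univ _⟩
  simp_rw [ψ.sub_eq_mul_sub_one]
  rw [prod_mul_distrib, ← ψ.map_sum_eq_prod, sum_offDiag_nonzeroSquares_snd,
    AddChar.map_zero_eq_one, one_mul, ← prod_fiberwise_of_maps_to hmaps, ← prod_pow]
  refine prod_congr rfl fun c hc => ?_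
  rw [prod_congr rfl fun x hx => by rw [(mem_filter.1 hx).2], prod_const]
  exact congrArg _ (squareDiffCount_eq hF (ne_of_mem_erase hc))

end FiniteField

theorem Nat.choose_two_two_mul_add_one (n : ℕ) : (2 * n + 1).choose 2 = (2 * n + 1) * n := by
  rw [Nat.choose_two_right, Nat.add_sub_cancel, mul_left_comm, Nat.mul_div_cancel_left _ two_pos]

theorem prod_erase_zero_pow_val_sub_one {R : Type*} [CommRing R] [IsDomain R] {n : ℕ} [NeZero n]
    (hn : Odd n) {ζ : R} (hζ : IsPrimitiveRoot ζ n) :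
    ∏ c ∈ univ.erase (0 : ZMod n), (ζ ^ c.val - 1) = n := by
  obtain ⟨k, rfl⟩ := hn
  have h := hζ.prod_pow_sub_one_eq_order
  rw [Even.neg_one_pow ⟨k, two_mul k⟩, one_mul] at h
  rw [Nat.cast_add, Nat.cast_one, ← h]
  refine prod_nbij' (fun c => c.val - 1) (fun i => ((i + 1 : ℕ) : ZMod (2 * k + 1)))
    ?_ ?_ ?_ ?_ ?_
  · intro c hc
    have := (ZMod.val_ne_zero c).2 (ne_of_mem_erase hc)
    have := c.val_lt
    rw [mem_range]
    omega
  · intro i hi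
    rw [mem_range] at hi
    rw [mem_erase, ← ZMod.val_ne_zero, ZMod.val_natCast_of_lt (by omega)]
    exact ⟨i.succ_ne_zero, mem_univ _⟩
  · intro c hc
    have := (ZMod.val_ne_zero c).2 (ne_of_mem_erase hc)
    rw [Nat.sub_add_cancel (Nat.one_le_iff_ne_zero.2 this), ZMod.natCast_zmod_val]
  · intro i hi
    rw [mem_range] at hi
    rw [ZMod.val_natCast_of_lt (by omega), Nat.add_sub_cancel]
  · intro c hc
    have := (ZMod.val_ne_zero c).2 (ne_of_mem_erase hc)
    rw [Nat.sub_add_cancel (Nat.one_le_iff_ne_zero.2 this)]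

section ZModPrime

variable {p : ℕ} [Fact p.Prime]

theorem injOn_sq_Icc : Set.InjOn (fun j : ℕ => (j : ZMod p) ^ 2) (Icc 1 ((p - 1) / 2)) := by
  intro j hj k hk h
  simp only [coe_Icc, Set.mem_Icc] at hj hk
  rcases sq_eq_sq_iff_eq_or_eq_neg.1 h with h | h
  · rwa [ZMod.natCast_eq_natCast_iff', Nat.mod_eq_of_lt (by omega),
      Nat.mod_eq_of_lt (by omega)] at h
  · have : ((j + k : ℕ) : ZMod p) = 0 := by rw [Nat.cast_add, h, neg_add_cancel]
    have := Nat.le_of_dvd (by omega) ((ZMod.natCast_eq_zero_iff _ _).1 this)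
    omega

theorem image_sq_Icc_eq_nonzeroSquares (hp4 : p % 4 = 3) :
    (Icc 1 ((p - 1) / 2)).image (fun j : ℕ => (j : ZMod p) ^ 2) = nonzeroSquares (ZMod p) := by
  refine eq_of_subset_of_card_le (fun x hx => ?_) ?_
  · obtain ⟨j, hj, rfl⟩ := mem_image.1 hx
    rw [mem_Icc] at hj
    have hj0 : (j : ZMod p) ≠ 0 := fun h0 =>
      absurd (Nat.le_of_dvd (by omega) ((ZMod.natCast_eq_zero_iff _ _).1 h0)) (by omega)
    exact mem_nonzeroSquares.2 ⟨pow_ne_zero 2 hj0, IsSquare.sq _⟩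
  · have := two_mul_card_nonzeroSquares (F := ZMod p) (by rwa [ZMod.card])
    rw [ZMod.card] at this
    rw [card_image_of_injOn injOn_sq_Icc, Nat.card_Icc]
    omega

end ZModPrime

/-- Let `p ≡ 3 (mod 4)` be a prime and `ζ = e^{2πi/p}`. Then
`∏_{1≤j<k≤(p-1)/2} (ζ^{j²} - ζ^{k²})² = (-p)^{(p-3)/4}`. -/
theorem stmt5 (p : ℕ) [hp : Fact p.Prime] (hp4 : p % 4 = 3)
    (ζ : ℂ) (hζ : ζ = Complex.exp (2 * Real.pi * Complex.I / p)) :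
    ∏ k ∈ Finset.Icc 1 ((p - 1) / 2), ∏ j ∈ Finset.Icc 1 (k - 1),
        (ζ ^ (j ^ 2) - ζ ^ (k ^ 2)) ^ 2
      = (-(p : ℂ)) ^ ((p - 3) / 4) := by
  have hprim : IsPrimitiveRoot ζ p := hζ ▸ Complex.isPrimitiveRoot_exp p hp.out.ne_zero
  let ψ := AddChar.zmodChar p hprim.pow_eq_one
  have hψ (j : ℕ) : ζ ^ (j ^ 2) = ψ ((j : ZMod p) ^ 2) := by
    rw [← Nat.cast_pow, AddChar.zmodChar_apply']
  have hsign : (-1 : ℂ) ^ (#(Icc 1 ((p - 1) / 2))).choose 2 = (-1) ^ ((p - 3) / 4) := by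
    rw [Nat.card_Icc, Nat.add_sub_cancel, show (p - 1) / 2 = 2 * ((p - 3) / 4) + 1 by omega,
      Nat.choose_two_two_mul_add_one, pow_mul, Odd.neg_one_pow ⟨_, rfl⟩]
  calc _ = ∏ x ∈ Icc 1 ((p - 1) / 2) ×ˢ Icc 1 ((p - 1) / 2) with x.1 < x.2,
        (ψ ((x.1 : ZMod p) ^ 2) - ψ ((x.2 : ZMod p) ^ 2)) ^ 2 := by
        simp only [prod_Icc_prod_Icc_sub_one, hψ]
    _ = (-1) ^ ((p - 3) / 4) * ∏ x ∈ (Icc 1 ((p - 1) / 2)).offDiag,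
        (ψ ((x.1 : ZMod p) ^ 2) - ψ ((x.2 : ZMod p) ^ 2)) := by
        rw [prod_offDiag_sub _ fun j : ℕ => ψ ((j : ZMod p) ^ 2), hsign, ← mul_assoc, ← pow_add,
          Even.neg_one_pow ⟨_, rfl⟩, one_mul]
    _ = (-1) ^ ((p - 3) / 4) * ∏ y ∈ (nonzeroSquares (ZMod p)).offDiag, (ψ y.1 - ψ y.2) := by
        rw [← image_sq_Icc_eq_nonzeroSquares hp4, prod_offDiag_image injOn_sq_Icc]
    _ = (-1) ^ ((p - 3) / 4) * (p : ℂ) ^ ((p - 3) / 4) := by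
        rw [prod_offDiag_nonzeroSquares_sub (by rwa [ZMod.card]), ZMod.card]
        congr 2
        exact prod_erase_zero_pow_val_sub_one (by rw [Nat.odd_iff]; omega) hprim
    _ = _ := by rw [← mul_pow, neg_one_mul]
end

section
/- Let p > 3 be a prime, set n = (p-1)/2 and ζ = e^{2πi/p}, and let M be the n × n matrix with first row (1, 1, ..., 1) and (i,j) entry ζ^{i·j²} for 2 ≤ i ≤ n, 1 ≤ j ≤ n. Then det M = ((τ̄_p - 1)/2) · ∏_{1≤j<k≤n} (ζ^{k²} - ζ^{j²}), where τ_p = ∑_{k=1}^{p-1} (k/p) ζ^k is the quadratic Gauss sum and τ̄_p is its complex conjugate. -/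
/-!
Put `xⱼ = ζ^{j²}`. The matrix is the transpose of the Vandermonde-type matrix in the points `xⱼ`
with exponents `0, 2, 3, …, n`. Expanding the Vandermonde determinant of `(-X, x₁, …, xₙ)` along
its first row and comparing with `V(x) ∏ (X + xⱼ)` coefficientwise shows that omitting the
exponent `k` multiplies `V(x)` by the elementary symmetric function `e_{n-k}(x)`; here `k = 1`.
As `p ∣ ∑ j² = n(n+1)p/6` for `p > 3`, `∏ xⱼ = 1`, so `e_{n-1}(x) = ∑ ζ^{-j²}`. Finally,
counting square roots in `𝔽_p` gives `∑_k (k/p) ξ^k = ∑_a ξ^{a²} = 1 + 2 ∑_{j ≤ n} ξ^{j²}` for every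
`p`-th root of unity `ξ ≠ 1`; take `ξ = ζ̄ = ζ⁻¹`.
-/

open Finset Polynomial Matrix

theorem Finset.sum_powersetCard_card_sub_one {ι M : Type*} [DecidableEq ι] [AddCommMonoid M]
    {s : Finset ι} (hs : s.Nonempty) (g : Finset ι → M) :
    ∑ t ∈ s.powersetCard (#s - 1), g t = ∑ j ∈ s, g (s.erase j) := by
  symm
  refine sum_bij (fun j _ => s.erase j) (fun j hj => ?_) (fun j hj j' hj' h => ?_)
    (fun t ht => ?_) (fun _ _ => rfl)
  · simp [erase_subset, card_erase_of_mem hj]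
  · exact (erase_inj s hj).mp h
  · rw [mem_powersetCard] at ht
    obtain ⟨j, hjs, hjt⟩ : ∃ j ∈ s, j ∉ t := not_subset.mp fun h => by
      have := card_le_card h
      have := hs.card_pos
      omega
    exact ⟨j, hjs, (eq_of_subset_of_card_le (subset_erase.mpr ⟨ht.1, hjt⟩)
      (by rw [card_erase_of_mem hjs, ht.2])).symm⟩

namespace Matrix

variable {R : Type*} [CommRing R] {n : ℕ}

def vandermondeOmit (x : Fin n → R) (k : Fin (n + 1)) : Matrix (Fin n) (Fin n) R :=
  of fun a b => x a ^ (k.succAbove b : ℕ)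

/- The extra point is `-X` rather than `X`: then the Laplace expansion along the first row has no
signs, and the product is `∏ (X + C xᵢ)`, the shape in which Vieta's formulas are stated. -/
theorem det_vandermonde_cons_neg_X (x : Fin n → R) :
    det (vandermonde (Fin.cons (-X) fun i => C (x i) : Fin (n + 1) → R[X])) =
      C (det (vandermonde x)) * ∏ i, (X + C (x i)) := by
  rw [det_vandermonde, det_vandermonde, Fin.prod_univ_succ, Fin.prod_Ioi_zero]
  simp [map_prod, mul_comm, add_comm]

theorem det_vandermonde_cons_neg_X_eq_sum (x : Fin n → R) :
    det (vandermonde (Fin.cons (-X) fun i => C (x i) : Fin (n + 1) → R[X])) =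
      ∑ k : Fin (n + 1), C (det (vandermondeOmit x k)) * X ^ (k : ℕ) := by
  rw [det_succ_row_zero]
  refine sum_congr rfl fun k _ => ?_
  have hminor : (vandermonde (Fin.cons (-X) fun i => C (x i) : Fin (n + 1) → R[X])).submatrix
      Fin.succ k.succAbove = (C : R →+* R[X]).mapMatrix (vandermondeOmit x k) := by
    ext a b : 1
    simp only [submatrix_apply, vandermonde_apply, Fin.cons_succ, RingHom.mapMatrix_apply,
      map_apply, vandermondeOmit, of_apply, map_pow]
  rw [hminor, ← RingHom.map_det, vandermonde_apply, Fin.cons_zero, ← mul_pow, neg_one_mul,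
    neg_neg, mul_comm]

theorem det_vandermondeOmit (x : Fin n → R) (k : Fin (n + 1)) :
    det (vandermondeOmit x k) =
      (∑ t ∈ univ.powersetCard (n - k), ∏ i ∈ t, x i) * det (vandermonde x) := by
  have h := congrArg (coeff · k)
    ((det_vandermonde_cons_neg_X_eq_sum x).symm.trans (det_vandermonde_cons_neg_X x))
  simp only [finsetSum_coeff, coeff_C_mul] at h
  rw [Finset.prod_X_add_C_coeff _ _ (by simpa using k.is_le)] at h
  simpa [Fin.val_inj, mul_comm] using h

theorem det_vandermondeOmit_one {m : ℕ} (x : Fin (m + 1) → R) :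
    det (vandermondeOmit x 1) = (∑ j, ∏ i ∈ univ.erase j, x i) * det (vandermonde x) := by
  rw [det_vandermondeOmit, ← sum_powersetCard_card_sub_one univ_nonempty fun t => ∏ i ∈ t, x i]
  simp

end Matrix

theorem Fin.prod_prod_Ioi_eq_prod_Icc_prod_Icc {M : Type*} [CommMonoid M] (n : ℕ)
    (f : ℕ → ℕ → M) :
    ∏ i : Fin n, ∏ j ∈ Ioi i, f (j + 1) (i + 1) = ∏ k ∈ Icc 1 n, ∏ j ∈ Icc 1 (k - 1), f k j := by
  rw [prod_sigma', prod_sigma']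
  refine prod_bij' (fun x _ => ⟨x.2 + 1, x.1 + 1⟩)
    (fun y hy => ⟨⟨y.2 - 1, by simp only [mem_sigma, mem_Icc] at hy; omega⟩,
      ⟨y.1 - 1, by simp only [mem_sigma, mem_Icc] at hy; omega⟩⟩)
    (fun x hx => ?_) (fun y hy => ?_) (fun x _ => rfl) (fun y hy => ?_) (fun _ _ => rfl)
  · simp only [mem_sigma, mem_univ, mem_Ioi, true_and, mem_Icc, Fin.lt_def] at hx ⊢
    omega
  · simp only [mem_sigma, mem_univ, mem_Ioi, true_and, mem_Icc, Fin.lt_def] at hy ⊢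
    omega
  · simp only [mem_sigma, mem_Icc] at hy
    ext <;> simp only [heq_eq_eq] <;> omega

theorem Nat.Prime.dvd_sum_range_sq {p : ℕ} (hp : p.Prime) (hp3 : 3 < p) :
    p ∣ ∑ j ∈ range (p / 2), (j + 1) ^ 2 := by
  have hsum (N : ℕ) : 6 * ∑ j ∈ range N, (j + 1) ^ 2 = N * (N + 1) * (2 * N + 1) := by
    induction N with
    | zero => rfl
    | succ N ih => rw [sum_range_succ, mul_add, ih]; ring
  have hcop : p.Coprime (2 * 3) := Nat.Coprime.mul_right
    ((Nat.coprime_primes hp Nat.prime_two).mpr (by omega))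
    ((Nat.coprime_primes hp Nat.prime_three).mpr (by omega))
  obtain ⟨N, rfl⟩ := hp.odd_of_ne_two (by omega)
  rw [show (2 * N + 1) / 2 = N by omega]
  exact hcop.dvd_of_dvd_mul_left ⟨N * (N + 1), by rw [hsum]; ring⟩

theorem ZMod.sum_eq_sum_range {M : Type*} [AddCommMonoid M] (N : ℕ) [NeZero N]
    (f : ZMod N → M) : ∑ a, f a = ∑ k ∈ range N, f k :=
  sum_nbij' ZMod.val (↑) (fun a _ => mem_range.mpr a.val_lt) (fun _ _ => mem_univ _)
    (fun a _ => ZMod.natCast_zmod_val a) (fun k hk => ZMod.val_cast_of_lt (mem_range.mp hk))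
    (fun a _ => by rw [ZMod.natCast_zmod_val])

theorem ZMod.sum_of_even {M : Type*} [AddCommMonoid M] {N : ℕ} [NeZero N] (hN : Odd N)
    {g : ZMod N → M} (hg : g.Even) :
    ∑ a, g a = g 0 + 2 • ∑ j ∈ range (N / 2), g (j + 1 : ℕ) := by
  obtain ⟨n, rfl⟩ := hN
  have hreflect : ∑ k ∈ range n, g (n + 1 + k : ℕ) = ∑ j ∈ range n, g (j + 1 : ℕ) := by
    rw [← sum_range_reflect]
    refine sum_congr rfl fun k hk => ?_
    have hk := mem_range.mp hk
    rw [← hg]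
    congr 1
    rw [neg_eq_iff_add_eq_zero, ← Nat.cast_add,
      show n + 1 + (n - 1 - k) + (k + 1) = 2 * n + 1 by omega, ZMod.natCast_self]
  rw [ZMod.sum_eq_sum_range, show range (2 * n + 1) = range ((n + 1) + n) by ring_nf,
    sum_range_add, sum_range_succ', show (2 * n + 1) / 2 = n by omega, hreflect, two_nsmul,
    Nat.cast_zero]
  abel

theorem sum_addChar_sq {F R : Type*} [Field F] [Fintype F] [DecidableEq F] [CommRing R]
    [IsDomain R] (hF : ringChar F ≠ 2) {ψ : AddChar F R} (hψ : ψ ≠ 1) :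
    ∑ a, ψ (a ^ 2) = ∑ b, (quadraticChar F b : R) * ψ b := by
  have hfibre (b : F) :
      ∑ a with a ^ 2 = b, ψ (a ^ 2) = ((quadraticChar F b : R) + 1) * ψ b := by
    have hcard : (#{a : F | a ^ 2 = b} : ℤ) = quadraticChar F b + 1 := by
      rw [← quadraticChar_card_sqrts hF b, Set.toFinset_ofPred]
    rw [sum_congr rfl fun a ha => by rw [(mem_filter.mp ha).2], sum_const, nsmul_eq_mul]
    exact_mod_cast congrArg (fun z : ℤ => (z : R) * ψ b) hcard
  rw [← sum_fiberwise univ (· ^ 2), sum_congr rfl fun b _ => hfibre b]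
  simp [add_mul, sum_add_distrib, AddChar.sum_eq_zero_of_ne_one hψ]

theorem sum_legendreSym_mul_pow {R : Type*} [CommRing R] [IsDomain R] {p : ℕ} [hp : Fact p.Prime]
    (hp2 : p ≠ 2) {ξ : R} (hξp : ξ ^ p = 1) (hξ : ξ ≠ 1) :
    ∑ k ∈ Icc 1 (p - 1), (legendreSym p k : R) * ξ ^ k =
      1 + 2 * ∑ j ∈ range (p / 2), ξ ^ ((j + 1) ^ 2) := by
  set ψ := AddChar.zmodChar p hξp
  have hψ (k : ℕ) : ψ k = ξ ^ k := AddChar.zmodChar_apply' hξp k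
  have hψ1 : ψ ≠ 1 := fun h => hξ (by simpa [h] using (hψ 1).symm)
  have hsq := sum_addChar_sq (by rwa [ZMod.ringChar_zmod_n]) hψ1
  rw [ZMod.sum_of_even (hp.out.odd_of_ne_two hp2) (g := fun a => ψ (a ^ 2)) fun a => by simp,
    ZMod.sum_eq_sum_range] at hsq
  have hIcc : Icc 1 (p - 1) = (range p).erase 0 := by
    ext k
    simp only [mem_Icc, mem_erase, mem_range]
    have := hp.out.one_lt
    omega
  rw [hIcc, sum_erase _ (by simp)]
  simp only [← Nat.cast_pow, hψ, nsmul_eq_mul, Nat.cast_ofNat] at hsq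
  simp only [legendreSym, Int.cast_natCast, ← hsq, ne_eq, OfNat.ofNat_ne_zero, not_false_eq_true,
    zero_pow, AddChar.map_zero_eq_one]

/-- Let `p > 3` be a prime, `n = (p-1)/2`, `ζ = e^{2πi/p}`, and let `M` be
the `n × n` matrix with first row `(1,…,1)` and `(i,j)` entry `ζ^{i·j²}` for `i ≥ 2`. Then
`det M = ((τ̄_p - 1)/2) ∏_{1≤j<k≤n} (ζ^{k²} - ζ^{j²})`, where
`τ_p = ∑_{k=1}^{p-1} (k/p) ζ^k` is the quadratic Gauss sum. -/
theorem stmt12 (p : ℕ) [hp : Fact p.Prime] (hp3 : 3 < p)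
    (ζ : ℂ) (hζ : ζ = Complex.exp (2 * Real.pi * Complex.I / p))
    (τ : ℂ) (hτ : τ = ∑ k ∈ Finset.Icc 1 (p - 1), (legendreSym p (k : ℤ) : ℂ) * ζ ^ k) :
    (Matrix.of fun i j : Fin ((p - 1) / 2) =>
        if (i : ℕ) + 1 = 1 then (1 : ℂ) else ζ ^ (((i : ℕ) + 1) * ((j : ℕ) + 1) ^ 2)).det
      = ((starRingEnd ℂ) τ - 1) / 2 *
          ∏ k ∈ Finset.Icc 1 ((p - 1) / 2), ∏ j ∈ Finset.Icc 1 (k - 1),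
            (ζ ^ (k ^ 2) - ζ ^ (j ^ 2)) := by
  obtain ⟨m, hm⟩ : ∃ m, (p - 1) / 2 = m + 1 := ⟨(p - 1) / 2 - 1, by omega⟩
  have hhalf : p / 2 = m + 1 := by have := hp.out.eq_one_or_self_of_dvd 2; omega
  have hprim : IsPrimitiveRoot ζ p := hζ ▸ Complex.isPrimitiveRoot_exp p hp.out.ne_zero
  have hconj : starRingEnd ℂ ζ = ζ⁻¹ :=
    (Complex.inv_eq_conj (hprim.norm'_eq_one hp.out.ne_zero)).symm
  set x : Fin (m + 1) → ℂ := fun j => ζ ^ ((j + 1 : ℕ) ^ 2)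
  have hM : (Matrix.of fun i j : Fin (m + 1) =>
        if (i : ℕ) + 1 = 1 then (1 : ℂ) else ζ ^ (((i : ℕ) + 1) * ((j : ℕ) + 1) ^ 2)) =
      (vandermondeOmit x 1)ᵀ := by
    ext i j
    cases i using Fin.cases <;> simp [vandermondeOmit, x, ← pow_mul, mul_comm]
  have hprod : ∏ j, x j = 1 := by
    obtain ⟨c, hc⟩ := hp.out.dvd_sum_range_sq hp3
    rw [prod_pow_eq_pow_sum, Fin.sum_univ_eq_sum_range (fun j => (j + 1) ^ 2), ← hhalf, hc,
      pow_mul, hprim.pow_eq_one, one_pow]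
  have hcofactor : ∑ j, ∏ i ∈ univ.erase j, x i = ∑ j ∈ range (p / 2), ζ⁻¹ ^ ((j + 1) ^ 2) := by
    rw [hhalf, ← Fin.sum_univ_eq_sum_range (fun j => ζ⁻¹ ^ ((j + 1) ^ 2))]
    refine sum_congr rfl fun j _ => ?_
    rw [eq_inv_of_mul_eq_one_right ((mul_prod_erase univ x (mem_univ j)).trans hprod), inv_pow]
  have hconjτ : starRingEnd ℂ τ = 1 + 2 * ∑ j ∈ range (p / 2), ζ⁻¹ ^ ((j + 1) ^ 2) := by
    rw [← sum_legendreSym_mul_pow (by omega) (by rw [inv_pow, hprim.pow_eq_one, inv_one])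
      (inv_ne_one.mpr (hprim.ne_one hp.out.one_lt)), hτ, map_sum]
    simp [hconj]
  rw [hm, hM, det_transpose, det_vandermondeOmit_one, hcofactor, hconjτ, det_vandermonde,
    Fin.prod_prod_Ioi_eq_prod_Icc_prod_Icc (m + 1) fun k j => ζ ^ (k ^ 2) - ζ ^ (j ^ 2)]
  ring
end

section
/- Let p > 3 be a prime. Then det[((i+j-1)/p)]_{1≤i,j≤(p-1)/2} = ((-1)/p) · det[((i+j)/p)]_{1≤i,j≤(p-1)/2}, where the matrix entries are Legendre symbols viewed as integers. -/
/-- Let `p > 3` be a prime. Then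
`det[((i+j-1)/p)]_{1≤i,j≤(p-1)/2} = ((-1)/p) · det[((i+j)/p)]_{1≤i,j≤(p-1)/2}`,
with Legendre-symbol entries viewed as integers. -/
theorem stmt15 (p : ℕ) [hp : Fact p.Prime] (hp3 : 3 < p) :
    (Matrix.of fun i j : Fin ((p - 1) / 2) =>
        legendreSym p ((((i : ℕ) + 1) + ((j : ℕ) + 1) - 1 : ℕ) : ℤ)).det
      = legendreSym p (-1) *
        (Matrix.of fun i j : Fin ((p - 1) / 2) =>
          legendreSym p ((((i : ℕ) + 1) + ((j : ℕ) + 1) : ℕ) : ℤ)).det := by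
  set n := (p - 1) / 2 with hn
  have hodd : Odd p := hp.out.odd_of_ne_two (by omega)
  obtain ⟨k, hk⟩ := hodd
  have hp2 : 2 * n + 1 = p := by omega
  set c : ℤ := legendreSym p (-1) with hc
  set B : Matrix (Fin n) (Fin n) ℤ :=
    Matrix.of fun i j : Fin n =>
      legendreSym p ((((i : ℕ) + 1) + ((j : ℕ) + 1) : ℕ) : ℤ) with hB
  have key : (Matrix.of fun i j : Fin n =>
        legendreSym p ((((i : ℕ) + 1) + ((j : ℕ) + 1) - 1 : ℕ) : ℤ))
      = (c • B).submatrix (Fin.revPerm : Equiv.Perm (Fin n)) Fin.revPerm := by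
    ext i j
    simp only [Matrix.submatrix_apply, Matrix.smul_apply, Matrix.of_apply, smul_eq_mul, hB,
      Equiv.coe_fn_mk, Fin.revPerm_apply]
    have hi := i.is_lt
    have hj := j.is_lt
    have hri : ((Fin.rev i : Fin n) : ℕ) = n - 1 - (i : ℕ) := by
      rw [Fin.val_rev]; omega
    have hrj : ((Fin.rev j : Fin n) : ℕ) = n - 1 - (j : ℕ) := by
      rw [Fin.val_rev]; omega
    rw [hri, hrj, hc, ← legendreSym.mul]
    have hcast : ((-1 : ℤ) * ((n - 1 - (i : ℕ) + 1 + (n - 1 - (j : ℕ) + 1) : ℕ) : ℤ))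
        = (((i : ℕ) + 1 + ((j : ℕ) + 1) - 1 : ℕ) : ℤ) - (p : ℤ) := by
      push_cast [Nat.sub_sub]
      omega
    rw [hcast, legendreSym.mod]
    conv_rhs => rw [legendreSym.mod]
    congr 1
    rw [Int.sub_emod, Int.emod_self, sub_zero, Int.emod_emod_of_dvd _ dvd_rfl]
  rw [key, Matrix.det_submatrix_equiv_self, Matrix.det_smul, Fintype.card_fin]
  have hc1 : c = 1 ∨ c = -1 := by
    rcases legendreSym.eq_one_or_neg_one p (a := -1) (by
      simp only [Int.cast_neg, Int.cast_one, ne_eq, neg_eq_zero]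
      exact one_ne_zero) with h | h
    · exact Or.inl h
    · exact Or.inr h
  have hcn : c ^ n = c := by
    rcases hc1 with h | h
    · simp [h]
    · have hsq : ¬ IsSquare (-1 : ZMod p) := by
        intro hs
        have := (legendreSym.eq_one_iff p (a := -1) (by
          simp only [Int.cast_neg, Int.cast_one, ne_eq, neg_eq_zero]
          exact one_ne_zero)).mpr (by simpa using hs)
        rw [← hc, h] at this; norm_num at this
      have hp4 : p % 4 = 3 := by
        by_contra h4
        exact hsq (ZMod.exists_sq_eq_neg_one_iff.mpr h4)
      have hnodd : Odd n := by
        refine ⟨p / 4, by omega⟩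
      rw [h, hnodd.neg_one_pow]
  rw [hcn]
end

section
/- Let p > 3 be a prime. Then det[((i+j-1)/p)]_{1≤i,j≤(p+1)/2} = det[((i+j)/p)]_{0≤i,j≤(p-1)/2}, where the matrix entries are Legendre symbols viewed as integers. -/
/-- Let `p > 3` be a prime. Then
`det[((i+j-1)/p)]_{1≤i,j≤(p+1)/2} = det[((i+j)/p)]_{0≤i,j≤(p-1)/2}`,
with Legendre-symbol entries viewed as integers. -/
theorem stmt16 (p : ℕ) [hp : Fact p.Prime] (hp3 : 3 < p) :
    (Matrix.of fun i j : Fin ((p + 1) / 2) =>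
        legendreSym p ((((i : ℕ) + 1) + ((j : ℕ) + 1) - 1 : ℕ) : ℤ)).det
      = (Matrix.of fun i j : Fin ((p - 1) / 2 + 1) =>
          legendreSym p (((i : ℕ) + (j : ℕ) : ℕ) : ℤ)).det := by
  have hodd : p % 2 = 1 := Nat.odd_iff.mp (hp.out.odd_of_ne_two (by omega))
  have hc : (p + 1) / 2 = (p - 1) / 2 + 1 := by omega
  set B : Matrix (Fin ((p - 1) / 2 + 1)) (Fin ((p - 1) / 2 + 1)) ℤ :=
    Matrix.of fun i j : Fin ((p - 1) / 2 + 1) =>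
      legendreSym p (((i : ℕ) + (j : ℕ) : ℕ) : ℤ) with hB
  let e : Fin ((p + 1) / 2) ≃ Fin ((p - 1) / 2 + 1) :=
    (finCongr hc).trans Fin.revPerm
  have key : (Matrix.of fun i j : Fin ((p + 1) / 2) =>
        legendreSym p ((((i : ℕ) + 1) + ((j : ℕ) + 1) - 1 : ℕ) : ℤ))
      = legendreSym p (-1) • (B.submatrix e e) := by
    ext i j
    have hi : (i : ℕ) ≤ (p - 1) / 2 := by have := i.isLt; omega
    have hj : (j : ℕ) ≤ (p - 1) / 2 := by have := j.isLt; omega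
    have hei : ((e i : Fin ((p - 1) / 2 + 1)) : ℕ) = (p - 1) / 2 - i := by
      simp [e, Fin.rev]
    have hej : ((e j : Fin ((p - 1) / 2 + 1)) : ℕ) = (p - 1) / 2 - j := by
      simp [e, Fin.rev]
    simp only [Matrix.of_apply, Matrix.smul_apply, Matrix.submatrix_apply, hB,
      hei, hej, smul_eq_mul]
    rw [← legendreSym.mul]
    have harg : ((((p - 1) / 2 - (i : ℕ)) + ((p - 1) / 2 - (j : ℕ)) : ℕ) : ℤ)
        = (p : ℤ) - (((i : ℕ) + 1 + ((j : ℕ) + 1) - 1 : ℕ) : ℤ) := by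
      have : (i : ℕ) + 1 + ((j : ℕ) + 1) - 1 = (i : ℕ) + (j : ℕ) + 1 := by omega
      rw [this]
      push_cast [Nat.cast_sub hi, Nat.cast_sub hj]
      have hp1 : ((p - 1 : ℕ) : ℤ) = (p : ℤ) - 1 := by
        push_cast [Nat.cast_sub (by omega : 1 ≤ p)]; ring
      have h2 : ((p - 1) / 2 : ℕ) * 2 = p - 1 := by omega
      have : (((p - 1) / 2 : ℕ) : ℤ) * 2 = (p : ℤ) - 1 := by
        rw [← hp1]; exact_mod_cast congrArg (Nat.cast : ℕ → ℤ) h2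
      linarith
    rw [harg]
    set k : ℤ := (((i : ℕ) + 1 + ((j : ℕ) + 1) - 1 : ℕ) : ℤ) with hk
    have : -1 * ((p : ℤ) - k) = k - p := by ring
    rw [this, legendreSym.mod p (k - p),
      (by simp [Int.sub_emod] : (k - (p : ℤ)) % p = k % p), ← legendreSym.mod]
  rw [key, Matrix.det_smul, Matrix.det_submatrix_equiv_self]
  have hcard : Fintype.card (Fin ((p + 1) / 2)) = (p + 1) / 2 := by simp
  rw [hcard]
  have hneg : legendreSym p (-1) = (-1 : ℤ) ^ (p / 2) := by
    rw [legendreSym.at_neg_one (by omega), ZMod.χ₄_eq_neg_one_pow hodd]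
  rw [hneg, ← pow_mul]
  have heven : Even (p / 2 * ((p + 1) / 2)) := by
    rcases Nat.even_or_odd (p / 2) with h | h
    · exact h.mul_right _
    · have h2 : Even ((p + 1) / 2) := by
        rw [Nat.even_iff]; rw [Nat.odd_iff] at h; omega
      exact h2.mul_left _
  rw [heven.neg_one_pow, one_mul]
end
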